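/- arXiv:2509.26188 — 2 statements merged into one kernel-verified Lean document; each statement's English description precedes it below -/
import Mathlib

section
/- Let d ≥ 1 be a natural number and λ > 0. There exists a constant C > 0 such that for every ε ∈ (0, 1/2): (i) if d = 1, then ∫₀^∞ s^{−1/2} (s + 2ε)^{−d/2} e^{−λ s} ds ≤ C · log(ε^{−1}); (ii) if d ≥ 2, then ∫₀^∞ s^{−1/2} (s + 2ε)^{−d/2} e^{−λ s} ds ≤ C · ε^{−(d−1)/2}. -/
open MeasureTheory Set Real

/-! Split `(0, ∞)` at `a = 2ε` and at `1`. On `(0, a]` bound `(s + a)^(-q)` by `a^(-q)`, on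
`(a, 1]` by `s^(-q)`, and on `(1, ∞)` keep only `e^(-λs)`. The outer pieces contribute
`O(a^(1-p-q))` and `O(1/λ)`; the middle one is `∫_a^1 s^(-(p+q)) ds`, which is `log a⁻¹` when
`p + q = 1` and `O(a^(1-p-q))` when `p + q > 1`. Here `p = 1/2` and `q = d/2`. -/

theorem integrableOn_of_nonneg_of_le {α : Type*} [MeasurableSpace α] {μ : Measure α}
    {f g : α → ℝ} {S : Set α} (hS : MeasurableSet S) (hf : AEStronglyMeasurable f (μ.restrict S))
    (hf0 : ∀ x ∈ S, 0 ≤ f x) (hfg : ∀ x ∈ S, f x ≤ g x) (hg : IntegrableOn g S μ) :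
    IntegrableOn f S μ :=
  hg.mono' hf <| (ae_restrict_iff' hS).2 <| ae_of_all _ fun x hx => by
    rw [Real.norm_of_nonneg (hf0 x hx)]
    exact hfg x hx

theorem setIntegral_Ioi_le_of_le_on_Ioc_Ioc_Ioi {f g₁ g₂ g₃ : ℝ → ℝ} {a b c : ℝ}
    (hab : a ≤ b) (hbc : b ≤ c) (hf : AEStronglyMeasurable f (volume.restrict (Ioi a)))
    (hf0 : ∀ s ∈ Ioi a, 0 ≤ f s) (h₁ : ∀ s ∈ Ioc a b, f s ≤ g₁ s)
    (h₂ : ∀ s ∈ Ioc b c, f s ≤ g₂ s) (h₃ : ∀ s ∈ Ioi c, f s ≤ g₃ s)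
    (hg₁ : IntegrableOn g₁ (Ioc a b)) (hg₂ : IntegrableOn g₂ (Ioc b c))
    (hg₃ : IntegrableOn g₃ (Ioi c)) :
    ∫ s in Ioi a, f s ≤ (∫ s in Ioc a b, g₁ s) + (∫ s in Ioc b c, g₂ s) + ∫ s in Ioi c, g₃ s := by
  have hsub₁ : Ioc a b ⊆ Ioi a := Ioc_subset_Ioi_self
  have hsub₂ : Ioc b c ⊆ Ioi a := fun s hs => hab.trans_lt hs.1
  have hsub₃ : Ioi c ⊆ Ioi a := Ioi_subset_Ioi (hab.trans hbc)
  have hf₁ : IntegrableOn f (Ioc a b) := integrableOn_of_nonneg_of_le measurableSet_Ioc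
    (hf.mono_set hsub₁) (fun s hs => hf0 s (hsub₁ hs)) h₁ hg₁
  have hf₂ : IntegrableOn f (Ioc b c) := integrableOn_of_nonneg_of_le measurableSet_Ioc
    (hf.mono_set hsub₂) (fun s hs => hf0 s (hsub₂ hs)) h₂ hg₂
  have hf₃ : IntegrableOn f (Ioi c) := integrableOn_of_nonneg_of_le measurableSet_Ioi
    (hf.mono_set hsub₃) (fun s hs => hf0 s (hsub₃ hs)) h₃ hg₃
  calc ∫ s in Ioi a, f s
      = (∫ s in Ioc a b, f s) + (∫ s in Ioc b c, f s) + ∫ s in Ioi c, f s := by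
        rw [← Ioc_union_Ioi_eq_Ioi (hab.trans hbc),
          setIntegral_union Ioc_disjoint_Ioi_same measurableSet_Ioi
            (Ioc_union_Ioc_eq_Ioc hab hbc ▸ hf₁.union hf₂) hf₃,
          ← Ioc_union_Ioc_eq_Ioc hab hbc,
          setIntegral_union (Ioc_disjoint_Ioc_of_le le_rfl) measurableSet_Ioc hf₁ hf₂]
    _ ≤ _ := by
        gcongr ?_ + ?_ + ?_
        · exact setIntegral_mono_on hf₁ hg₁ measurableSet_Ioc h₁
        · exact setIntegral_mono_on hf₂ hg₂ measurableSet_Ioc h₂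
        · exact setIntegral_mono_on hf₃ hg₃ measurableSet_Ioi h₃

section Integrand

variable {p q lam a s : ℝ}

theorem rpow_mul_add_rpow_mul_exp_le_of_pos (hq : 0 ≤ q) (hlam : 0 ≤ lam) (ha : 0 < a)
    (hs : 0 < s) : s ^ (-p) * (s + a) ^ (-q) * exp (-lam * s) ≤ a ^ (-q) * s ^ (-p) := by
  have hsa : (s + a) ^ (-q) ≤ a ^ (-q) :=
    rpow_le_rpow_of_nonpos ha (by linarith) (neg_nonpos.2 hq)
  have he : exp (-lam * s) ≤ 1 := exp_le_one_iff.2 (by nlinarith)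
  calc s ^ (-p) * (s + a) ^ (-q) * exp (-lam * s) ≤ s ^ (-p) * a ^ (-q) * 1 := by gcongr
    _ = a ^ (-q) * s ^ (-p) := by ring

theorem rpow_mul_add_rpow_mul_exp_le_rpow (hq : 0 ≤ q) (hlam : 0 ≤ lam) (ha : 0 ≤ a)
    (hs : 0 < s) : s ^ (-p) * (s + a) ^ (-q) * exp (-lam * s) ≤ s ^ (-(p + q)) := by
  have hsa : (s + a) ^ (-q) ≤ s ^ (-q) :=
    rpow_le_rpow_of_nonpos hs (by linarith) (neg_nonpos.2 hq)
  have he : exp (-lam * s) ≤ 1 := exp_le_one_iff.2 (by nlinarith)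
  calc s ^ (-p) * (s + a) ^ (-q) * exp (-lam * s) ≤ s ^ (-p) * s ^ (-q) * 1 := by gcongr
    _ = s ^ (-(p + q)) := by rw [mul_one, ← rpow_add hs, neg_add]

theorem rpow_mul_add_rpow_mul_exp_le_exp (hp : 0 ≤ p) (hq : 0 ≤ q) (ha : 0 ≤ a)
    (hs : 1 ≤ s) : s ^ (-p) * (s + a) ^ (-q) * exp (-lam * s) ≤ exp (-lam * s) := by
  have h₁ : s ^ (-p) ≤ 1 := rpow_le_one_of_one_le_of_nonpos hs (neg_nonpos.2 hp)
  have h₂ : (s + a) ^ (-q) ≤ 1 := rpow_le_one_of_one_le_of_nonpos (by linarith) (neg_nonpos.2 hq)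
  calc s ^ (-p) * (s + a) ^ (-q) * exp (-lam * s) ≤ 1 * 1 * exp (-lam * s) := by gcongr
    _ = exp (-lam * s) := by ring

end Integrand

section Integrals

variable {p r lam a : ℝ}

theorem integrableOn_Ioc_zero_rpow_neg (hp : p < 1) :
    IntegrableOn (fun s : ℝ => s ^ (-p)) (Ioc 0 a) := by
  rcases le_total 0 a with ha | ha
  · exact (intervalIntegrable_iff_integrableOn_Ioc_of_le ha).1
      (intervalIntegral.intervalIntegrable_rpow' (by linarith))
  · simp [Ioc_eq_empty_of_le ha]

theorem integral_Ioc_zero_rpow_neg (hp : p < 1) (ha : 0 ≤ a) :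
    ∫ s in Ioc 0 a, s ^ (-p) = a ^ (1 - p) / (1 - p) := by
  rw [← intervalIntegral.integral_of_le ha, integral_rpow (Or.inl (by linarith)),
    zero_rpow (by linarith), sub_zero, ← sub_eq_neg_add]

theorem integrableOn_Ioc_rpow_of_pos (ha : 0 < a) (b : ℝ) :
    IntegrableOn (fun s : ℝ => s ^ r) (Ioc a b) :=
  (continuousOn_id.rpow_const fun _ hs => Or.inl (ha.trans_le hs.1).ne').integrableOn_Icc
    |>.mono_set Ioc_subset_Icc_self

theorem integral_Ioc_rpow_neg_one (ha : 0 < a) (ha1 : a ≤ 1) :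
    ∫ s in Ioc a 1, s ^ (-1 : ℝ) = log a⁻¹ := by
  simp_rw [rpow_neg_one]
  rw [← intervalIntegral.integral_of_le ha1, integral_inv_of_pos ha one_pos, one_div]

theorem integral_Ioc_rpow_neg_le (hr : 1 < r) (ha : 0 < a) (ha1 : a ≤ 1) :
    ∫ s in Ioc a 1, s ^ (-r) ≤ a ^ (1 - r) / (r - 1) := by
  have h0 : (0 : ℝ) ∉ uIcc a 1 := by
    rw [uIcc_of_le ha1]
    exact fun h => ha.not_ge h.1
  rw [← intervalIntegral.integral_of_le ha1,
    integral_rpow (Or.inr ⟨by linarith, h0⟩), one_rpow, ← sub_eq_neg_add,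
    show 1 - r = -(r - 1) by ring, div_neg, ← neg_div, neg_sub]
  gcongr
  linarith

theorem integral_Ioi_exp_neg_mul_le (hlam : 0 < lam) {c : ℝ} (hc : 0 ≤ c) :
    ∫ s in Ioi c, exp (-lam * s) ≤ 1 / lam := by
  rw [integral_exp_mul_Ioi (by linarith) c, neg_div, div_neg, neg_neg]
  gcongr
  exact exp_le_one_iff.2 (by nlinarith)

end Integrals

section Estimate

variable {p q lam : ℝ}

theorem integral_rpow_mul_add_rpow_mul_exp_le (hp0 : 0 ≤ p) (hp1 : p < 1) (hq : 0 ≤ q)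
    (hlam : 0 < lam) {a : ℝ} (ha0 : 0 < a) (ha1 : a ≤ 1) :
    ∫ s in Ioi 0, s ^ (-p) * (s + a) ^ (-q) * exp (-lam * s)
      ≤ a ^ (1 - p - q) / (1 - p) + (∫ s in Ioc a 1, s ^ (-(p + q))) + 1 / lam := by
  have hnear : ∫ s in Ioc 0 a, a ^ (-q) * s ^ (-p) = a ^ (1 - p - q) / (1 - p) := by
    rw [integral_const_mul, integral_Ioc_zero_rpow_neg hp1 ha0.le, mul_div_assoc',
      ← rpow_add ha0]
    ring_nf
  calc ∫ s in Ioi 0, s ^ (-p) * (s + a) ^ (-q) * exp (-lam * s)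
      ≤ (∫ s in Ioc 0 a, a ^ (-q) * s ^ (-p)) + (∫ s in Ioc a 1, s ^ (-(p + q)))
          + ∫ s in Ioi 1, exp (-lam * s) :=
        setIntegral_Ioi_le_of_le_on_Ioc_Ioc_Ioi ha0.le ha1 (by fun_prop)
          (fun s (hs : 0 < s) => by positivity)
          (fun s hs => rpow_mul_add_rpow_mul_exp_le_of_pos hq hlam.le ha0 hs.1)
          (fun s hs => rpow_mul_add_rpow_mul_exp_le_rpow hq hlam.le ha0.le (ha0.trans hs.1))
          (fun s hs => rpow_mul_add_rpow_mul_exp_le_exp hp0 hq ha0.le hs.le)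
          ((integrableOn_Ioc_zero_rpow_neg hp1).const_mul _)
          (integrableOn_Ioc_rpow_of_pos ha0 1)
          (integrableOn_exp_mul_Ioi (by linarith) 1)
    _ ≤ _ := by
        rw [hnear]
        gcongr
        exact integral_Ioi_exp_neg_mul_le hlam zero_le_one

theorem exists_integral_rpow_mul_add_rpow_mul_exp_le_mul_log (hp0 : 0 ≤ p) (hp1 : p < 1)
    (hlam : 0 < lam) :
    ∃ C > 0, ∀ ε ∈ Ioo (0 : ℝ) (1 / 2),
      ∫ s in Ioi 0, s ^ (-p) * (s + 2 * ε) ^ (-(1 - p)) * exp (-lam * s) ≤ C * log ε⁻¹ := by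
  set K := 1 / (1 - p) + 1 / lam
  have h1p : 0 < 1 - p := by linarith
  have hK : 0 < K := by positivity
  have hlog2 : 0 < log 2 := log_pos one_lt_two
  refine ⟨K / log 2 + 1, by positivity, fun ε ⟨hε0, hε2⟩ => ?_⟩
  have hlog : log 2 ≤ log ε⁻¹ :=
    log_le_log two_pos (by rw [le_inv_comm₀ two_pos hε0]; linarith)
  have hlog' : log (2 * ε)⁻¹ ≤ log ε⁻¹ :=
    log_le_log (by positivity) (inv_anti₀ hε0 (by linarith))
  calc ∫ s in Ioi 0, s ^ (-p) * (s + 2 * ε) ^ (-(1 - p)) * exp (-lam * s)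
      ≤ (2 * ε) ^ (1 - p - (1 - p)) / (1 - p) + (∫ s in Ioc (2 * ε) 1, s ^ (-(p + (1 - p))))
          + 1 / lam :=
        integral_rpow_mul_add_rpow_mul_exp_le hp0 hp1 (by linarith) hlam (by positivity)
          (by linarith)
    _ = K + log (2 * ε)⁻¹ := by
        rw [sub_self, rpow_zero, add_sub_cancel, integral_Ioc_rpow_neg_one (by positivity)
          (by linarith)]
        ring
    _ ≤ K / log 2 * log ε⁻¹ + log ε⁻¹ := by
        gcongr
        rw [div_mul_eq_mul_div, le_div_iff₀ hlog2]
        gcongr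
    _ = (K / log 2 + 1) * log ε⁻¹ := by ring

theorem exists_integral_rpow_mul_add_rpow_mul_exp_le_mul_rpow (hp0 : 0 ≤ p) (hp1 : p < 1)
    (hpq : 1 < p + q) (hlam : 0 < lam) :
    ∃ C > 0, ∀ ε ∈ Ioo (0 : ℝ) (1 / 2),
      ∫ s in Ioi 0, s ^ (-p) * (s + 2 * ε) ^ (-q) * exp (-lam * s) ≤ C * ε ^ (1 - p - q) := by
  have h1p : 0 < 1 - p := by linarith
  have hpq' : 0 < p + q - 1 := by linarith
  refine ⟨1 / (1 - p) + 1 / (p + q - 1) + 1 / lam, by positivity, fun ε ⟨hε0, hε2⟩ => ?_⟩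
  have hexp : 1 - p - q ≤ 0 := by linarith
  have hmono : (2 * ε) ^ (1 - p - q) ≤ ε ^ (1 - p - q) :=
    rpow_le_rpow_of_nonpos hε0 (by linarith) hexp
  have hone : 1 ≤ ε ^ (1 - p - q) :=
    one_le_rpow_of_pos_of_le_one_of_nonpos hε0 (by linarith) hexp
  calc ∫ s in Ioi 0, s ^ (-p) * (s + 2 * ε) ^ (-q) * exp (-lam * s)
      ≤ (2 * ε) ^ (1 - p - q) / (1 - p) + (∫ s in Ioc (2 * ε) 1, s ^ (-(p + q))) + 1 / lam :=
        integral_rpow_mul_add_rpow_mul_exp_le hp0 hp1 (by linarith) hlam (by positivity)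
          (by linarith)
    _ ≤ (2 * ε) ^ (1 - p - q) / (1 - p) + (2 * ε) ^ (1 - p - q) / (p + q - 1) + 1 / lam := by
        gcongr
        simpa only [sub_add_eq_sub_sub] using
          integral_Ioc_rpow_neg_le hpq (by positivity : 0 < 2 * ε) (by linarith)
    _ ≤ ε ^ (1 - p - q) / (1 - p) + ε ^ (1 - p - q) / (p + q - 1)
          + 1 / lam * ε ^ (1 - p - q) := by
        gcongr
        exact le_mul_of_one_le_right (by positivity) hone
    _ = _ := by ring

end Estimate

theorem stmt6_general (d : ℕ) (lam : ℝ) (hlam : 0 < lam) :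
    ∃ C > 0, ∀ ε : ℝ, ε ∈ Set.Ioo (0 : ℝ) (1/2) →
      (d = 1 →
        ∫ s in Set.Ioi (0 : ℝ), s ^ (-(1:ℝ)/2) * (s + 2 * ε) ^ (-(d : ℝ) / 2) * Real.exp (-lam * s)
          ≤ C * Real.log ε⁻¹) ∧
      (2 ≤ d →
        ∫ s in Set.Ioi (0 : ℝ), s ^ (-(1:ℝ)/2) * (s + 2 * ε) ^ (-(d : ℝ) / 2) * Real.exp (-lam * s)
          ≤ C * ε ^ (-((d : ℝ) - 1) / 2)) := by
  rcases lt_or_ge d 2 with hd | hd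
  · obtain ⟨C, hC, hbound⟩ :=
      exists_integral_rpow_mul_add_rpow_mul_exp_le_mul_log (p := 1 / 2) (by norm_num)
        (by norm_num) hlam
    refine ⟨C, hC, fun ε hε => ⟨fun hd1 => ?_, fun hd2 => absurd hd2 (by omega)⟩⟩
    subst hd1
    convert hbound ε hε using 5 <;> norm_num
  · have hd' : (2 : ℝ) ≤ d := by exact_mod_cast hd
    obtain ⟨C, hC, hbound⟩ :=
      exists_integral_rpow_mul_add_rpow_mul_exp_le_mul_rpow (p := 1 / 2) (q := d / 2)
        (by norm_num) (by norm_num) (by linarith) hlam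
    refine ⟨C, hC, fun ε hε => ⟨fun hd1 => absurd hd1 (by omega), fun _ => ?_⟩⟩
    simp only [neg_div]
    convert hbound ε hε using 3
    ring

theorem stmt6 (d : ℕ) (hd : 1 ≤ d) (lam : ℝ) (hlam : 0 < lam) :
    ∃ C > 0, ∀ ε : ℝ, ε ∈ Set.Ioo (0 : ℝ) (1/2) →
      (d = 1 →
        ∫ s in Set.Ioi (0 : ℝ), s ^ (-(1:ℝ)/2) * (s + 2 * ε) ^ (-(d : ℝ) / 2) * Real.exp (-lam * s)
          ≤ C * Real.log ε⁻¹) ∧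
      (2 ≤ d →
        ∫ s in Set.Ioi (0 : ℝ), s ^ (-(1:ℝ)/2) * (s + 2 * ε) ^ (-(d : ℝ) / 2) * Real.exp (-lam * s)
          ≤ C * ε ^ (-((d : ℝ) - 1) / 2)) :=
  stmt6_general d lam hlam
end

section
/- Let α ∈ (0, 1], let d ≥ 1 be a natural number, let c₁ > 0, and let (λ_i)_{i≥1} be a sequence of positive reals with λ_i ≥ c₁ · i^{2/d} for all i ≥ 1. Then there exists a constant C > 0 such that for every ε ∈ (0, 1): (i) if d < 2(1+α), then Σ_{i=1}^∞ e^{−2 λ_i ε} λ_i^{−(1+α)} ≤ C; (ii) if d = 2(1+α), then Σ_{i=1}^∞ e^{−2 λ_i ε} λ_i^{−(1+α)} ≤ C · log(1 + ε^{−1}); (iii) if d > 2(1+α), then Σ_{i=1}^∞ e^{−2 λ_i ε} λ_i^{−(1+α)} ≤ C · ε^{−(d − 2(1+α))/2}. -/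
/-!
With `p = 2(1+α)/d`, Weyl's lower bound gives `λᵢ ^ (-(1+α)) ≤ c₁ ^ (-(1+α)) i ^ (-p)`,
and `e ^ (-y) ≤ (d/2) ^ (d/2) y ^ (-d/2)` turns `e ^ (-2 λᵢ ε)` into `T ε ^ (-d/2) i⁻¹`.
So with `K = c₁ ^ (-(1+α))` the `i`-th term is at most `K i ^ (-p)` and at most
`K M i ^ (-(1+p))` with `M = T ε ^ (-d/2)`. For `p > 1` the first bound is summable.
Otherwise split the series at `N = ⌈M⌉`: by telescoping, the head is at most `K (1 + log N)`
(`p = 1`) or `K N ^ (1-p) / (1-p)` (`p < 1`), and the tail at most `K M N ^ (-p) / p`, which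
is of the same order; finally `M ^ (1-p) ≍ ε ^ (-(d - 2(1+α))/2)`.
-/

open Finset Real

lemma exp_neg_le_rpow_mul_rpow_neg {s x : ℝ} (hs : 0 < s) (hx : 0 < x) :
    exp (-x) ≤ s ^ s * x ^ (-s) :=
  calc exp (-x) = (exp (x / s) ^ s)⁻¹ := by rw [← exp_mul, div_mul_cancel₀ x hs.ne', exp_neg]
    _ ≤ ((x / s) ^ s)⁻¹ := by
        gcongr
        linarith [add_one_le_exp (x / s)]
    _ = s ^ s * x ^ (-s) := by
        rw [div_rpow hx.le hs.le, rpow_neg hx.le, inv_div, div_eq_mul_inv]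

lemma one_sub_mul_rpow_neg_le_rpow_sub_rpow {p x : ℝ} (hp0 : 0 ≤ p) (hp1 : p ≤ 1) (hx : 0 ≤ x) :
    (1 - p) * (x + 1) ^ (-p) ≤ (x + 1) ^ (1 - p) - x ^ (1 - p) := by
  have hy : 0 < x + 1 := by linarith
  have hinv : (x + 1)⁻¹ ≤ 1 := inv_le_one_of_one_le₀ (by linarith)
  have hpow : (x + 1) ^ (-p) = (x + 1) ^ (1 - p) / (x + 1) := by
    rw [← rpow_sub_one hy.ne']; ring_nf
  have : x ^ (1 - p) ≤ (x + 1) ^ (1 - p) * (1 + (1 - p) * -(x + 1)⁻¹) :=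
    calc x ^ (1 - p) = ((x + 1) * (1 + -(x + 1)⁻¹)) ^ (1 - p) := by
          congr 1; field_simp; ring
      _ = (x + 1) ^ (1 - p) * (1 + -(x + 1)⁻¹) ^ (1 - p) := mul_rpow hy.le (by linarith)
      _ ≤ _ := by
          gcongr
          exact rpow_one_add_le_one_add_mul_self (by linarith) (by linarith) (by linarith)
  rw [hpow]
  field_simp at this ⊢
  linarith

lemma mul_rpow_neg_one_add_le_rpow_neg_sub_rpow_neg {q x : ℝ} (hq : 0 ≤ q) (hx : 0 < x) :
    q * (x + 1) ^ (-(1 + q)) ≤ x ^ (-q) - (x + 1) ^ (-q) := by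
  have hy : 0 < x + 1 := by linarith
  have ht : 0 < x / (x + 1) := by positivity
  have hpow : (x + 1) ^ (-(1 + q)) = (x + 1) ^ (-q) / (x + 1) := by
    rw [← rpow_sub_one hy.ne']; ring_nf
  -- tangent line of the convex function `t ↦ t ^ (-q)` at `t = 1`
  have htangent : 1 + q / (x + 1) ≤ (x / (x + 1)) ^ (-q) := by
    have hlog : log (x / (x + 1)) ≤ -(x + 1)⁻¹ := by
      have e : x / (x + 1) - 1 = -(x + 1)⁻¹ := by field_simp; ring
      linarith [log_le_sub_one_of_pos ht]
    rw [rpow_def_of_pos ht, div_eq_mul_inv]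
    linarith [add_one_le_exp (log (x / (x + 1)) * -q), mul_le_mul_of_nonneg_left hlog hq]
  have : (x + 1) ^ (-q) * (1 + q / (x + 1)) ≤ x ^ (-q) :=
    calc (x + 1) ^ (-q) * (1 + q / (x + 1)) ≤ (x + 1) ^ (-q) * (x / (x + 1)) ^ (-q) := by gcongr
      _ = x ^ (-q) := by rw [← mul_rpow hy.le ht.le, mul_div_cancel₀ x hy.ne']
  rw [hpow]
  field_simp at this ⊢
  linarith

lemma add_mul_log_inv_le {a s ε : ℝ} (ha : 0 ≤ a) (hs : 0 ≤ s) (hε0 : 0 < ε) (hε1 : ε ≤ 1) :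
    a + s * log ε⁻¹ ≤ (2 * a + s) * log (1 + ε⁻¹) := by
  have hinv : 1 ≤ ε⁻¹ := one_le_inv₀ hε0 |>.2 hε1
  have hhalf : 1 / 2 ≤ log (1 + ε⁻¹) :=
    calc (1 : ℝ) / 2 ≤ log 2 := by linarith [log_two_gt_d9]
      _ ≤ log (1 + ε⁻¹) := log_le_log two_pos (by linarith)
  have hlog : log ε⁻¹ ≤ log (1 + ε⁻¹) := log_le_log (by positivity) (by linarith)
  nlinarith [mul_le_mul_of_nonneg_left hlog hs]

lemma sum_range_rpow_neg_le {p : ℝ} (hp0 : 0 ≤ p) (hp1 : p < 1) (N : ℕ) :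
    ∑ i ∈ range N, ((i : ℝ) + 1) ^ (-p) ≤ (N : ℝ) ^ (1 - p) / (1 - p) := by
  rw [le_div_iff₀' (sub_pos.2 hp1), mul_sum]
  calc ∑ i ∈ range N, (1 - p) * ((i : ℝ) + 1) ^ (-p)
      ≤ ∑ i ∈ range N, (((i + 1 : ℕ) : ℝ) ^ (1 - p) - (i : ℝ) ^ (1 - p)) :=
        sum_le_sum fun i _ => by
          push_cast; exact one_sub_mul_rpow_neg_le_rpow_sub_rpow hp0 hp1.le i.cast_nonneg
    _ = (N : ℝ) ^ (1 - p) := by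
        rw [sum_range_sub (fun i : ℕ => (i : ℝ) ^ (1 - p))]
        simp [zero_rpow (sub_pos.2 hp1).ne']

lemma sum_Ico_rpow_neg_one_add_le {q : ℝ} (hq : 0 < q) {N n : ℕ} (hN : 1 ≤ N) (hNn : N ≤ n) :
    ∑ i ∈ Ico N n, ((i : ℝ) + 1) ^ (-(1 + q)) ≤ (N : ℝ) ^ (-q) / q := by
  rw [le_div_iff₀' hq, mul_sum]
  calc ∑ i ∈ Ico N n, q * ((i : ℝ) + 1) ^ (-(1 + q))
      ≤ ∑ i ∈ Ico N n, -((((i + 1 : ℕ) : ℝ) ^ (-q)) - (i : ℝ) ^ (-q)) :=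
        sum_le_sum fun i hi => by
          have hi : (0 : ℝ) < i := Nat.cast_pos.2 (by have := (mem_Ico.1 hi).1; omega)
          push_cast; rw [neg_sub]
          exact mul_rpow_neg_one_add_le_rpow_neg_sub_rpow_neg hq.le hi
    _ = (N : ℝ) ^ (-q) - (n : ℝ) ^ (-q) := by
        rw [sum_neg_distrib, sum_Ico_sub (fun i : ℕ => (i : ℝ) ^ (-q)) hNn, neg_sub]
    _ ≤ (N : ℝ) ^ (-q) := sub_le_self _ (rpow_nonneg n.cast_nonneg _)

lemma tsum_le_add_of_le_of_le {f u v : ℕ → ℝ} (hf : ∀ i, 0 ≤ f i) (hu : ∀ i, f i ≤ u i)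
    (hv : ∀ i, f i ≤ v i) (N : ℕ) {A B : ℝ} (hA : ∑ i ∈ range N, u i ≤ A)
    (hB : ∀ n, N ≤ n → ∑ i ∈ Ico N n, v i ≤ B) : ∑' i, f i ≤ A + B := by
  refine tsum_le_of_sum_range_le hf fun n => ?_
  calc ∑ i ∈ range n, f i ≤ ∑ i ∈ range (max n N), f i :=
        sum_le_sum_of_subset_of_nonneg (range_subset_range.2 (le_max_left n N))
          fun i _ _ => hf i
    _ = ∑ i ∈ range N, f i + ∑ i ∈ Ico N (max n N), f i :=
        (sum_range_add_sum_Ico f (le_max_right n N)).symm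
    _ ≤ A + B := add_le_add ((sum_le_sum fun i _ => hu i).trans hA)
        ((sum_le_sum fun i _ => hv i).trans (hB _ (le_max_right n N)))

section DoublyDominated

variable {f : ℕ → ℝ} {K M : ℝ}

-- The exponent `-(1 + 1)` is that of `tsum_le_mul_rpow_one_sub` at `p = 1`.
lemma tsum_le_mul_two_add_log (hK : 0 ≤ K) (hM : 1 ≤ M) (hf : ∀ i, 0 ≤ f i)
    (hf₁ : ∀ i, f i ≤ K * ((i : ℝ) + 1) ^ (-1 : ℝ))
    (hf₂ : ∀ i, f i ≤ K * M * ((i : ℝ) + 1) ^ (-(1 + 1) : ℝ)) :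
    ∑' i, f i ≤ K * (2 + log (2 * M)) := by
  set N := ⌈M⌉₊
  have hN : 1 ≤ N := Nat.one_le_ceil_iff.2 (by linarith)
  have hMN : M ≤ N := Nat.le_ceil M
  have hN2 : (N : ℝ) ≤ 2 * M := Nat.ceil_le_two_mul (by linarith)
  have hhead : ∑ i ∈ range N, K * ((i : ℝ) + 1) ^ (-1 : ℝ) ≤ K * (1 + log (2 * M)) := by
    rw [← mul_sum]
    gcongr
    calc ∑ i ∈ range N, ((i : ℝ) + 1) ^ (-1 : ℝ) = harmonic N := by
          simp [harmonic, rpow_neg_one]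
      _ ≤ 1 + log N := harmonic_le_one_add_log N
      _ ≤ 1 + log (2 * M) := by gcongr
  have htail (n : ℕ) (hn : N ≤ n) :
      ∑ i ∈ Ico N n, K * M * ((i : ℝ) + 1) ^ (-(1 + 1) : ℝ) ≤ K := by
    rw [← mul_sum]
    calc K * M * ∑ i ∈ Ico N n, ((i : ℝ) + 1) ^ (-(1 + 1) : ℝ)
        ≤ K * M * ((N : ℝ) ^ (-1 : ℝ) / 1) := by
          gcongr; exact sum_Ico_rpow_neg_one_add_le one_pos hN hn
      _ = K * (M / N) := by rw [rpow_neg_one]; ring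
      _ ≤ K := mul_le_of_le_one_right hK (div_le_one_of_le₀ hMN (by positivity))
  exact (tsum_le_add_of_le_of_le hf hf₁ hf₂ N hhead htail).trans_eq (by ring)

lemma tsum_le_mul_rpow_one_sub {p : ℝ} (hK : 0 ≤ K) (hM : 1 ≤ M) (hp0 : 0 < p) (hp1 : p < 1)
    (hf : ∀ i, 0 ≤ f i) (hf₁ : ∀ i, f i ≤ K * ((i : ℝ) + 1) ^ (-p))
    (hf₂ : ∀ i, f i ≤ K * M * ((i : ℝ) + 1) ^ (-(1 + p))) :
    ∑' i, f i ≤ K * (2 / (1 - p) + 1 / p) * M ^ (1 - p) := by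
  set N := ⌈M⌉₊
  have hN : 1 ≤ N := Nat.one_le_ceil_iff.2 (by linarith)
  have hMN : M ≤ N := Nat.le_ceil M
  have hN2 : (N : ℝ) ≤ 2 * M := Nat.ceil_le_two_mul (by linarith)
  have hhead : ∑ i ∈ range N, K * ((i : ℝ) + 1) ^ (-p) ≤ K * (2 / (1 - p)) * M ^ (1 - p) := by
    rw [← mul_sum, mul_assoc]
    gcongr
    calc ∑ i ∈ range N, ((i : ℝ) + 1) ^ (-p) ≤ (N : ℝ) ^ (1 - p) / (1 - p) :=
          sum_range_rpow_neg_le hp0.le hp1 N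
      _ ≤ (2 * M) ^ (1 - p) / (1 - p) := by gcongr
      _ = 2 ^ (1 - p) * M ^ (1 - p) / (1 - p) := by rw [mul_rpow zero_le_two (by linarith)]
      _ ≤ 2 * M ^ (1 - p) / (1 - p) := by
          gcongr
          simpa using rpow_le_rpow_of_exponent_le one_le_two (by linarith : 1 - p ≤ 1)
      _ = 2 / (1 - p) * M ^ (1 - p) := by ring
  have htail (n : ℕ) (hn : N ≤ n) :
      ∑ i ∈ Ico N n, K * M * ((i : ℝ) + 1) ^ (-(1 + p)) ≤ K * (1 / p) * M ^ (1 - p) := by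
    rw [← mul_sum]
    calc K * M * ∑ i ∈ Ico N n, ((i : ℝ) + 1) ^ (-(1 + p)) ≤ K * M * ((N : ℝ) ^ (-p) / p) := by
          gcongr; exact sum_Ico_rpow_neg_one_add_le hp0 hN hn
      _ ≤ K * M * (M ^ (-p) / p) :=
          mul_le_mul_of_nonneg_left (div_le_div_of_nonneg_right
            (rpow_le_rpow_of_nonpos (by linarith) hMN (neg_nonpos.2 hp0.le)) hp0.le)
            (mul_nonneg hK (by linarith))
      _ = K * (1 / p) * M ^ (1 - p) := by
          rw [sub_eq_add_neg, rpow_add (by linarith : (0 : ℝ) < M), rpow_one]; ring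
  exact (tsum_le_add_of_le_of_le hf hf₁ hf₂ N hhead htail).trans_eq (by ring)

end DoublyDominated

noncomputable def weylTerm (α ε l : ℝ) : ℝ := exp (-2 * l * ε) * l ^ (-(1 + α))

noncomputable def weylSum (α ε : ℝ) (lam : ℕ → ℝ) : ℝ := ∑' i : ℕ, weylTerm α ε (lam (i + 1))

noncomputable def weylTailConst (c : ℝ) (d : ℕ) : ℝ :=
  max 1 (((d : ℝ) / 2) ^ ((d : ℝ) / 2) * (2 * c) ^ (-((d : ℝ) / 2)))

lemma one_le_weylTailConst (c : ℝ) (d : ℕ) : 1 ≤ weylTailConst c d := le_max_left _ _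

section WeylTerm

variable {α c ε x l : ℝ} {d : ℕ}

lemma weylTerm_nonneg (hl : 0 ≤ l) : 0 ≤ weylTerm α ε l :=
  mul_nonneg (exp_pos _).le (rpow_nonneg hl _)

lemma rpow_neg_le_of_mul_rpow_le {a : ℝ} (ha : 0 ≤ a) (hc : 0 < c) (hx : 0 < x)
    (hl : c * x ^ ((2 : ℝ) / d) ≤ l) : l ^ (-a) ≤ c ^ (-a) * x ^ (-(2 * a / d)) :=
  calc l ^ (-a) ≤ (c * x ^ ((2 : ℝ) / d)) ^ (-a) :=
        rpow_le_rpow_of_nonpos (by positivity) hl (neg_nonpos.2 ha)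
    _ = c ^ (-a) * x ^ (-(2 * a / d)) := by
        rw [mul_rpow hc.le (by positivity), ← rpow_mul hx.le]; ring_nf

lemma weylTerm_le_rpow (hα : 0 ≤ 1 + α) (hc : 0 < c) (hε : 0 ≤ ε) (hx : 0 < x)
    (hl : c * x ^ ((2 : ℝ) / d) ≤ l) :
    weylTerm α ε l ≤ c ^ (-(1 + α)) * x ^ (-(2 * (1 + α) / d)) := by
  have hl0 : 0 < l := lt_of_lt_of_le (by positivity) hl
  refine (mul_le_of_le_one_left (rpow_nonneg hl0.le _) ?_).trans
    (rpow_neg_le_of_mul_rpow_le hα hc hx hl)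
  exact exp_le_one_iff.2 (by nlinarith)

lemma weylTerm_le_mul_rpow (hα : 0 ≤ 1 + α) (hc : 0 < c) (hε : 0 < ε) (hd : 0 < d) (hx : 0 < x)
    (hl : c * x ^ ((2 : ℝ) / d) ≤ l) :
    weylTerm α ε l ≤ c ^ (-(1 + α)) * (weylTailConst c d * ε ^ (-((d : ℝ) / 2))) *
      x ^ (-(1 + 2 * (1 + α) / d)) := by
  have hd' : (0 : ℝ) < d := Nat.cast_pos.2 hd
  have hl0 : 0 < l := lt_of_lt_of_le (by positivity) hl
  have hexp : exp (-2 * l * ε) ≤ weylTailConst c d * ε ^ (-((d : ℝ) / 2)) * x ^ (-1 : ℝ) :=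
    calc exp (-2 * l * ε) ≤ exp (-(2 * c * ε * x ^ ((2 : ℝ) / d))) := by
          gcongr; nlinarith
      _ ≤ ((d : ℝ) / 2) ^ ((d : ℝ) / 2) * (2 * c * ε * x ^ ((2 : ℝ) / d)) ^ (-((d : ℝ) / 2)) :=
          exp_neg_le_rpow_mul_rpow_neg (by positivity) (by positivity)
      _ = ((d : ℝ) / 2) ^ ((d : ℝ) / 2) * (2 * c) ^ (-((d : ℝ) / 2)) * ε ^ (-((d : ℝ) / 2)) *
            x ^ (-1 : ℝ) := by
          rw [mul_rpow (by positivity) (by positivity), mul_rpow (by positivity) hε.le,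
            ← rpow_mul hx.le]
          field_simp
      _ ≤ weylTailConst c d * ε ^ (-((d : ℝ) / 2)) * x ^ (-1 : ℝ) := by
          gcongr; exact le_max_right _ _
  calc weylTerm α ε l
      ≤ (weylTailConst c d * ε ^ (-((d : ℝ) / 2)) * x ^ (-1 : ℝ)) *
          (c ^ (-(1 + α)) * x ^ (-(2 * (1 + α) / d))) :=
        mul_le_mul hexp (rpow_neg_le_of_mul_rpow_le hα hc hx hl) (rpow_nonneg hl0.le _)
          (hexp.trans' (exp_pos _).le)
    _ = _ := by
        rw [show -(1 + 2 * (1 + α) / d) = (-1 : ℝ) + -(2 * (1 + α) / d) by ring, rpow_add hx]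
        ring

end WeylTerm

section WeylSum

variable {α c₁ : ℝ} {d : ℕ} {lam : ℕ → ℝ}

theorem exists_weylSum_le_of_lt (hα : 0 < 1 + α) (hc₁ : 0 < c₁) (hd : 0 < d)
    (hweyl : ∀ i : ℕ, c₁ * ((i : ℝ) + 1) ^ ((2 : ℝ) / d) ≤ lam (i + 1))
    (hdα : (d : ℝ) < 2 * (1 + α)) :
    ∃ C > 0, ∀ ε ≥ 0, weylSum α ε lam ≤ C := by
  set p := 2 * (1 + α) / d
  have hp : 1 < p := (one_lt_div (Nat.cast_pos.2 hd)).2 hdα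
  have hsum : Summable fun i : ℕ => c₁ ^ (-(1 + α)) * ((i : ℝ) + 1) ^ (-p) := by
    refine Summable.mul_left _ ?_
    simpa using (summable_nat_add_iff 1).2 (summable_nat_rpow.2 (by linarith : -p < -1))
  refine ⟨_, hsum.tsum_pos (fun i => by positivity) 0 (by positivity), fun ε hε => ?_⟩
  have hle i : weylTerm α ε (lam (i + 1)) ≤ c₁ ^ (-(1 + α)) * ((i : ℝ) + 1) ^ (-p) :=
    weylTerm_le_rpow hα.le hc₁ hε (by positivity) (hweyl i)
  have hnonneg i : 0 ≤ weylTerm α ε (lam (i + 1)) :=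
    weylTerm_nonneg ((hweyl i).trans' (by positivity))
  exact (hsum.of_nonneg_of_le hnonneg hle).tsum_le_tsum hle hsum

theorem exists_weylSum_le_mul_log_of_eq (hc₁ : 0 < c₁) (hd : 0 < d)
    (hweyl : ∀ i : ℕ, c₁ * ((i : ℝ) + 1) ^ ((2 : ℝ) / d) ≤ lam (i + 1))
    (hdα : (d : ℝ) = 2 * (1 + α)) :
    ∃ C > 0, ∀ ε ∈ Set.Ioo (0 : ℝ) 1, weylSum α ε lam ≤ C * log (1 + ε⁻¹) := by
  have hd' : (0 : ℝ) < d := Nat.cast_pos.2 hd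
  have hα : 0 ≤ 1 + α := by linarith
  have hp : 2 * (1 + α) / d = 1 := by rw [← hdα, div_self hd'.ne']
  set K := c₁ ^ (-(1 + α))
  set T := weylTailConst c₁ d
  have hT := one_le_weylTailConst c₁ d
  have hlogT : 0 ≤ log (2 * T) := log_nonneg (by linarith)
  refine ⟨K * (2 * (2 + log (2 * T)) + d / 2), by positivity, fun ε ⟨hε0, hε1⟩ => ?_⟩
  have hE : 1 ≤ ε ^ (-((d : ℝ) / 2)) :=
    one_le_rpow_of_pos_of_le_one_of_nonpos hε0 hε1.le (by linarith)
  have hsum := tsum_le_mul_two_add_log (f := fun i => weylTerm α ε (lam (i + 1))) (K := K)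
    (by positivity) (one_le_mul_of_one_le_of_one_le hT hE)
    (fun i => weylTerm_nonneg ((hweyl i).trans' (by positivity)))
    (fun i => by simpa only [hp] using weylTerm_le_rpow hα hc₁ hε0.le (by positivity) (hweyl i))
    (fun i => by simpa only [hp] using weylTerm_le_mul_rpow hα hc₁ hε0 hd (by positivity) (hweyl i))
  calc weylSum α ε lam ≤ K * (2 + log (2 * (T * ε ^ (-((d : ℝ) / 2))))) := hsum
    _ = K * ((2 + log (2 * T)) + d / 2 * log ε⁻¹) := by
        rw [← mul_assoc, log_mul (by positivity) (by positivity), log_rpow hε0, log_inv]; ring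
    _ ≤ K * ((2 * (2 + log (2 * T)) + d / 2) * log (1 + ε⁻¹)) := by
        gcongr; exact add_mul_log_inv_le (by positivity) (by positivity) hε0 hε1.le
    _ = _ := by ring

theorem exists_weylSum_le_mul_rpow_of_gt (hα : 0 < 1 + α) (hc₁ : 0 < c₁) (hd : 0 < d)
    (hweyl : ∀ i : ℕ, c₁ * ((i : ℝ) + 1) ^ ((2 : ℝ) / d) ≤ lam (i + 1))
    (hdα : 2 * (1 + α) < (d : ℝ)) :
    ∃ C > 0, ∀ ε ∈ Set.Ioo (0 : ℝ) 1,
      weylSum α ε lam ≤ C * ε ^ (-((d : ℝ) - 2 * (1 + α)) / 2) := by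
  have hd' : (0 : ℝ) < d := Nat.cast_pos.2 hd
  set p := 2 * (1 + α) / d
  have hp0 : 0 < p := by positivity
  have hp1 : p < 1 := (div_lt_one hd').2 hdα
  set K := c₁ ^ (-(1 + α))
  set T := weylTailConst c₁ d
  have hT := one_le_weylTailConst c₁ d
  have hp1' : 0 < 1 - p := by linarith
  refine ⟨K * (2 / (1 - p) + 1 / p) * T ^ (1 - p), by positivity, fun ε ⟨hε0, hε1⟩ => ?_⟩
  have hE : 1 ≤ ε ^ (-((d : ℝ) / 2)) :=
    one_le_rpow_of_pos_of_le_one_of_nonpos hε0 hε1.le (by linarith)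
  have hsum := tsum_le_mul_rpow_one_sub (f := fun i => weylTerm α ε (lam (i + 1))) (K := K)
    (by positivity) (one_le_mul_of_one_le_of_one_le hT hE) hp0 hp1
    (fun i => weylTerm_nonneg ((hweyl i).trans' (by positivity)))
    (fun i => weylTerm_le_rpow hα.le hc₁ hε0.le (by positivity) (hweyl i))
    (fun i => weylTerm_le_mul_rpow hα.le hc₁ hε0 hd (by positivity) (hweyl i))
  calc weylSum α ε lam ≤ K * (2 / (1 - p) + 1 / p) * (T * ε ^ (-((d : ℝ) / 2))) ^ (1 - p) := hsum
    _ = K * (2 / (1 - p) + 1 / p) * T ^ (1 - p) * ε ^ (-((d : ℝ) - 2 * (1 + α)) / 2) := by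
        have hexp : -((d : ℝ) / 2) * (1 - p) = -((d : ℝ) - 2 * (1 + α)) / 2 := by
          simp only [p]; field_simp
        rw [mul_rpow (by positivity) (by positivity), ← rpow_mul hε0.le, hexp]; ring

end WeylSum

theorem stmt8_general (α : ℝ) (hα : α ∈ Set.Ioc (0 : ℝ) 1) (d : ℕ) (hd : 1 ≤ d) (c₁ : ℝ) (hc₁ : 0 < c₁)
    (lam : ℕ → ℝ)
    (hweyl : ∀ i : ℕ, 1 ≤ i → c₁ * (i : ℝ) ^ ((2 : ℝ) / d) ≤ lam i) :
    ∃ C > 0, ∀ ε : ℝ, ε ∈ Set.Ioo (0 : ℝ) 1 →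
      ((d : ℝ) < 2 * (1 + α) →
        ∑' i : ℕ, Real.exp (-2 * lam (i + 1) * ε) * (lam (i + 1)) ^ (-(1 + α)) ≤ C) ∧
      ((d : ℝ) = 2 * (1 + α) →
        ∑' i : ℕ, Real.exp (-2 * lam (i + 1) * ε) * (lam (i + 1)) ^ (-(1 + α))
          ≤ C * Real.log (1 + ε⁻¹)) ∧
      ((d : ℝ) > 2 * (1 + α) →
        ∑' i : ℕ, Real.exp (-2 * lam (i + 1) * ε) * (lam (i + 1)) ^ (-(1 + α))
          ≤ C * ε ^ (-((d : ℝ) - 2 * (1 + α)) / 2)) := by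
  have hα' : 0 < 1 + α := by linarith [hα.1]
  have hweyl' (i : ℕ) : c₁ * ((i : ℝ) + 1) ^ ((2 : ℝ) / d) ≤ lam (i + 1) := by
    exact_mod_cast hweyl (i + 1) (Nat.le_add_left 1 i)
  rcases lt_trichotomy (d : ℝ) (2 * (1 + α)) with h | h | h
  · obtain ⟨C, hC, hbound⟩ := exists_weylSum_le_of_lt hα' hc₁ hd hweyl' h
    exact ⟨C, hC, fun ε hε => ⟨fun _ => hbound ε hε.1.le, fun h' => absurd h' h.ne,
      fun h' => absurd h' h.not_gt⟩⟩
  · obtain ⟨C, hC, hbound⟩ := exists_weylSum_le_mul_log_of_eq hc₁ hd hweyl' h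
    exact ⟨C, hC, fun ε hε => ⟨fun h' => absurd h h'.ne, fun _ => hbound ε hε,
      fun h' => absurd h h'.ne'⟩⟩
  · obtain ⟨C, hC, hbound⟩ := exists_weylSum_le_mul_rpow_of_gt hα' hc₁ hd hweyl' h
    exact ⟨C, hC, fun ε hε => ⟨fun h' => absurd h h'.not_gt, fun h' => absurd h' h.ne',
      fun _ => hbound ε hε⟩⟩

theorem stmt8 (α : ℝ) (hα : α ∈ Set.Ioc (0 : ℝ) 1) (d : ℕ) (hd : 1 ≤ d) (c₁ : ℝ) (hc₁ : 0 < c₁)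
    (lam : ℕ → ℝ) (hpos : ∀ i : ℕ, 1 ≤ i → 0 < lam i)
    (hweyl : ∀ i : ℕ, 1 ≤ i → c₁ * (i : ℝ) ^ ((2 : ℝ) / d) ≤ lam i) :
    ∃ C > 0, ∀ ε : ℝ, ε ∈ Set.Ioo (0 : ℝ) 1 →
      ((d : ℝ) < 2 * (1 + α) →
        ∑' i : ℕ, Real.exp (-2 * lam (i + 1) * ε) * (lam (i + 1)) ^ (-(1 + α)) ≤ C) ∧
      ((d : ℝ) = 2 * (1 + α) →
        ∑' i : ℕ, Real.exp (-2 * lam (i + 1) * ε) * (lam (i + 1)) ^ (-(1 + α))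
          ≤ C * Real.log (1 + ε⁻¹)) ∧
      ((d : ℝ) > 2 * (1 + α) →
        ∑' i : ℕ, Real.exp (-2 * lam (i + 1) * ε) * (lam (i + 1)) ^ (-(1 + α))
          ≤ C * ε ^ (-((d : ℝ) - 2 * (1 + α)) / 2)) :=
  stmt8_general α hα d hd c₁ hc₁ lam hweyl
end
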